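/- Interpolation violates locality: under the same kernel assumptions (x_0 \in N_k, y \notin N_k, K(x_0, y) \neq 0), the attributions A_1 \equiv 0 and A_2 = 1_{\{y\}} agree on N_k but produce different outputs at x_0: \tilde{A}_1(x_0) = 0 \neq K(x_0, y) = \tilde{A}_2(x_0). -/

import Mathlib

theorem interpolation_violates_locality_general
    {Ω : Type*} [Fintype Ω] [DecidableEq Ω] {Knum : ℕ}
    (ν : Ω → Fin Knum)
    (K : Ω → Ω → ℝ)
    (k : Fin Knum) (x₀ y : Ω)
    (hy : ν y ≠ k)
    (hKy : K x₀ y ≠ 0)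
    (A₁ A₂ : Ω → ℝ)
    (hA₁ : ∀ z, A₁ z = 0)
    (hA₂ : ∀ z, A₂ z = if z = y then 1 else 0) :
    (∀ x, ν x = k → A₁ x = A₂ x) ∧
    (∑ z, K x₀ z * A₁ z = 0) ∧
    (∑ z, K x₀ z * A₂ z = K x₀ y) ∧
    (∑ z, K x₀ z * A₁ z ≠ ∑ z, K x₀ z * A₂ z) := by
  have hzero : ∑ z, K x₀ z * A₁ z = 0 := by simp [hA₁]
  have hsingle : ∑ z, K x₀ z * A₂ z = K x₀ y := by simp [hA₂]
  refine ⟨fun x hx => ?_, hzero, hsingle, by rw [hzero, hsingle]; exact hKy.symm⟩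
  have hxy : x ≠ y := fun h => hy (h ▸ hx)
  rw [hA₁, hA₂, if_neg hxy]

/-- Interpolation violates locality: two attributions agreeing on a
neighbourhood can produce different interpolated outputs at a boundary pixel
of that neighbourhood. -/
theorem interpolation_violates_locality
    {Ω : Type*} [Fintype Ω] [DecidableEq Ω] {Knum : ℕ}
    (ν : Ω → Fin Knum)
    (K : Ω → Ω → ℝ)
    (k : Fin Knum) (x₀ y : Ω)
    (hx₀ : ν x₀ = k) (hy : ν y ≠ k)
    (hKy : K x₀ y ≠ 0)
    (A₁ A₂ : Ω → ℝ)
    (hA₁ : ∀ z, A₁ z = 0)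
    (hA₂ : ∀ z, A₂ z = if z = y then 1 else 0) :
    (∀ x, ν x = k → A₁ x = A₂ x) ∧
    (∑ z, K x₀ z * A₁ z = 0) ∧
    (∑ z, K x₀ z * A₂ z = K x₀ y) ∧
    (∑ z, K x₀ z * A₁ z ≠ ∑ z, K x₀ z * A₂ z) :=
  interpolation_violates_locality_general ν K k x₀ y hy hKy A₁ A₂ hA₁ hA₂
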